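/- Let ν be a mean-zero probability measure on ℝ^{d_M} with covariance matrix 𝒞 = E_ν[m mᵀ] having eigenvalues λ₁^{KLE} ≥ … ≥ λ_{d_M}^{KLE} with orthonormal eigenvectors, and let V_r ∈ ℝ^{d_M×r} have as columns the top r eigenvectors of 𝒞. Let q : ℝ^{d_M} → ℝ^{d_Q} be Lipschitz continuous with constant L_q and ‖q‖_{L²_ν} < ∞, and set q_r = q ∘ (V_r V_rᵀ). Let Φ̂_r ∈ ℝ^{d_Q×r} consist of the top r orthonormal eigenvectors of E_ν[q_r q_rᵀ] with eigenvalues λ̂₁^{POD} ≥ … ≥ λ̂_{d_Q}^{POD} sorted in descending order. Then ‖q − Φ̂_r Φ̂_rᵀ q_r‖²_{L²_ν} ≤ 2 L_q² Σ_{i=r+1}^{d_M} λ_i^{KLE} + 2 Σ_{i=r+1}^{d_Q} λ̂_i^{POD}. -/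

import Mathlib

open MeasureTheory Matrix

/-- `ℝ^n` with the Euclidean norm. -/
abbrev E (n : ℕ) := EuclideanSpace ℝ (Fin n)

/-- The `L²_ν` norm of a vector-valued function: `‖f‖²_{L²_ν} = ∫ ‖f(m)‖²_{ℓ²} dν(m)`. -/
noncomputable def L2norm {d k : ℕ} (ν : Measure (E d)) (f : E d → E k) : ℝ :=
  Real.sqrt (∫ m, ‖f m‖ ^ 2 ∂ν)

/-- Application of a matrix to a Euclidean vector. -/
noncomputable def matApp {m n : ℕ} (A : Matrix (Fin m) (Fin n) ℝ) (x : E n) : E m :=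
  Matrix.toEuclideanLin A x

/-- The operator norm of a matrix, induced by the Euclidean vector norms. -/
noncomputable def opNorm {m n : ℕ} (A : Matrix (Fin m) (Fin n) ℝ) : ℝ :=
  ‖(Matrix.toEuclideanLin A).toContinuousLinearMap‖

/-- Covariance matrix `𝒞 = E_ν[(m − m₀)(m − m₀)ᵀ]`. -/
noncomputable def covMatrix {d : ℕ} (ν : Measure (E d)) (m₀ : E d) :
    Matrix (Fin d) (Fin d) ℝ :=
  Matrix.of fun i j => ∫ m, (m i - m₀ i) * (m j - m₀ j) ∂ν

/-- The second-moment matrix `E_ν[f fᵀ] = ∫ f(m) f(m)ᵀ dν(m)`. -/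
noncomputable def secondMoment {dM dQ : ℕ} (ν : Measure (E dM)) (f : E dM → E dQ) :
    Matrix (Fin dQ) (Fin dQ) ℝ :=
  Matrix.of fun i j => ∫ m, f m i * f m j ∂ν

/-! ### Auxiliary lemmas -/

lemma matApp_apply' {m n : ℕ} (A : Matrix (Fin m) (Fin n) ℝ) (x : E n) (i : Fin m) :
    matApp A x i = ∑ j, A i j * x j := rfl

lemma norm_sq_eq' {n : ℕ} (x : E n) : ‖x‖^2 = ∑ i, (x i)^2 := by
  rw [EuclideanSpace.norm_eq, Real.sq_sqrt (by positivity)]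
  simp [sq_abs]

lemma sum_castLE' {n r : ℕ} (hr : r ≤ n) (g : Fin n → ℝ) :
    ∑ j : Fin r, g (Fin.castLE hr j)
      = ∑ i ∈ Finset.univ.filter (fun i : Fin n => ¬ r ≤ (i:ℕ)), g i := by
  have hset : Finset.univ.map (Fin.castLEEmb hr) =
      Finset.univ.filter (fun i : Fin n => ¬ r ≤ (i:ℕ)) := by
    ext i
    simp only [Finset.mem_map, Finset.mem_univ, true_and, Finset.mem_filter, not_le]
    constructor
    · rintro ⟨j, rfl⟩; simpa using j.isLt
    · intro h; exact ⟨⟨(i:ℕ), h⟩, by ext; simp⟩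
  rw [← hset, Finset.sum_map]
  rfl

lemma diag_entry' {n : ℕ} (M U : Matrix (Fin n) (Fin n) ℝ) (lam : Fin n → ℝ)
    (horth : Uᵀ * U = 1) (heig : M * U = U * Matrix.diagonal lam) (i : Fin n) :
    ∑ a, ∑ b, U a i * (M a b * U b i) = lam i := by
  have h : Uᵀ * M * U = Matrix.diagonal lam := by
    rw [Matrix.mul_assoc, heig, ← Matrix.mul_assoc, horth, Matrix.one_mul]
  have h2 := congrArg (fun A : Matrix (Fin n) (Fin n) ℝ => A i i) h
  simp only [Matrix.mul_apply, Matrix.transpose_apply, Matrix.diagonal_apply_eq] at h2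
  rw [← h2, Finset.sum_comm]
  apply Finset.sum_congr rfl; intro b _
  rw [Finset.sum_mul]
  apply Finset.sum_congr rfl; intro a _; ring

lemma resid_sq' {n r : ℕ} (hr : r ≤ n) (U : Matrix (Fin n) (Fin n) ℝ)
    (horth : Uᵀ * U = 1) (Ur : Matrix (Fin n) (Fin r) ℝ)
    (hUr : ∀ (i : Fin n) (j : Fin r), Ur i j = U i (Fin.castLE hr j)) (x : E n) :
    ‖x - matApp (Ur * Urᵀ) x‖^2
      = ∑ i ∈ Finset.univ.filter (fun i : Fin n => r ≤ (i:ℕ)), (∑ a, U a i * x a)^2 := by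
  set y : Fin n → ℝ := fun i => ∑ a, U a i * x a with hy
  have horth2 : U * Uᵀ = 1 := mul_eq_one_comm.mp horth
  have hUentry : ∀ i j : Fin n, ∑ a, U a i * U a j = if i = j then 1 else 0 := by
    intro i j
    have := congrArg (fun A : Matrix (Fin n) (Fin n) ℝ => A i j) horth
    simpa [Matrix.mul_apply, Matrix.transpose_apply, Matrix.one_apply] using this
  have hx : ∀ a, x a = ∑ i, U a i * y i := by
    intro a
    have h1 : ∑ i, U a i * y i = ∑ b, (∑ i, U a i * U b i) * x b := by
      simp_rw [hy, Finset.mul_sum, Finset.sum_mul]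
      rw [Finset.sum_comm]
      exact Finset.sum_congr rfl fun b _ => Finset.sum_congr rfl fun i _ => by ring
    have h2 : ∀ b, ∑ i, U a i * U b i = (U * Uᵀ) a b := by
      intro b; simp [Matrix.mul_apply, Matrix.transpose_apply]
    simp_rw [h1, h2, horth2]
    simp [Matrix.one_apply]
  have hP : ∀ a, matApp (Ur * Urᵀ) x a
      = ∑ i ∈ Finset.univ.filter (fun i : Fin n => ¬ r ≤ (i:ℕ)), U a i * y i := by
    intro a
    rw [matApp_apply']
    have h1 : ∀ b, (Ur * Urᵀ) a b
        = ∑ j : Fin r, U a (Fin.castLE hr j) * U b (Fin.castLE hr j) := by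
      intro b; simp [Matrix.mul_apply, Matrix.transpose_apply, hUr]
    simp_rw [h1, Finset.sum_mul]
    rw [Finset.sum_comm]
    rw [← sum_castLE' hr (fun i => U a i * y i)]
    apply Finset.sum_congr rfl; intro j _
    simp_rw [hy, Finset.mul_sum]
    exact Finset.sum_congr rfl fun b _ => by ring
  have hres : ∀ a, (x - matApp (Ur * Urᵀ) x) a
      = ∑ i ∈ Finset.univ.filter (fun i : Fin n => r ≤ (i:ℕ)), U a i * y i := by
    intro a
    have h0 : (x - matApp (Ur * Urᵀ) x) a = x a - matApp (Ur * Urᵀ) x a := rfl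
    rw [h0, hx a, hP a, ← Finset.sum_filter_add_sum_filter_not Finset.univ
      (fun i : Fin n => r ≤ (i:ℕ)) (fun i => U a i * y i)]
    ring
  rw [norm_sq_eq']
  simp_rw [hres]
  have expand : ∀ a, (∑ i ∈ Finset.univ.filter (fun i : Fin n => r ≤ (i:ℕ)), U a i * y i)^2
      = ∑ i ∈ Finset.univ.filter (fun i : Fin n => r ≤ (i:ℕ)),
          ∑ j ∈ Finset.univ.filter (fun i : Fin n => r ≤ (i:ℕ)),
            (U a i * U a j) * (y i * y j) := by
    intro a
    rw [sq, Finset.sum_mul_sum]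
    exact Finset.sum_congr rfl fun i _ => Finset.sum_congr rfl fun j _ => by ring
  simp_rw [expand]
  rw [Finset.sum_comm]
  have step : ∀ i ∈ Finset.univ.filter (fun i : Fin n => r ≤ (i:ℕ)),
      (∑ a : Fin n, ∑ j ∈ Finset.univ.filter (fun i : Fin n => r ≤ (i:ℕ)),
        (U a i * U a j) * (y i * y j)) = (y i)^2 := by
    intro i hi
    rw [Finset.sum_comm]
    have hsum : ∀ j, (∑ a : Fin n, (U a i * U a j) * (y i * y j))
        = (if i = j then 1 else 0) * (y i * y j) := by
      intro j
      rw [← Finset.sum_mul, hUentry i j]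
    simp_rw [hsum]
    have h2 : ∀ j, (if i = j then (1:ℝ) else 0) * (y i * y j)
        = if i = j then y i * y j else 0 := by
      intro j; split <;> simp
    simp_rw [h2]
    rw [Finset.sum_ite_eq]
    simp [hi, sq]
  exact Finset.sum_congr rfl step

section MT
variable {α : Type*} [MeasurableSpace α] {ν : Measure α}

lemma mul_integrable' {f g : α → ℝ} (hf : MemLp f 2 ν) (hg : MemLp g 2 ν) :
    Integrable (fun m => f m * g m) ν := by
  have h1 := (hf.add hg).integrable_sq
  have h2 := hf.integrable_sq
  have h3 := hg.integrable_sq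
  have key : (fun m => f m * g m)
      = fun m => (((f m + g m)^2 - f m ^2) - g m ^2) / 2 := by
    funext m; ring
  rw [key]
  exact ((h1.sub h2).sub h3).div_const 2

lemma memℒp_dot' {n : ℕ} {f : α → E n} (hf : MemLp f 2 ν) (v : Fin n → ℝ) :
    MemLp (fun m => ∑ a, v a * f m a) 2 ν := by
  have hc : MemLp (fun m => (inner ℝ ((WithLp.equiv 2 (Fin n → ℝ)).symm v) (f m))) 2 ν :=
    hf.const_inner _
  have he : (fun m => (inner ℝ ((WithLp.equiv 2 (Fin n → ℝ)).symm v) (f m)))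
      = fun m => ∑ a, v a * f m a := by
    funext m
    simp [PiLp.inner_apply, RCLike.inner_apply, mul_comm]
  rwa [he] at hc

lemma memℒp_comp' {n : ℕ} {f : α → E n} (hf : MemLp f 2 ν) (a : Fin n) :
    MemLp (fun m => f m a) 2 ν := by
  have := memℒp_dot' hf (fun b => if b = a then 1 else 0)
  simpa using this

lemma integral_dot_sq' {n : ℕ} {f : α → E n} (hf : MemLp f 2 ν) (v : Fin n → ℝ)
    (M : Matrix (Fin n) (Fin n) ℝ) (hM : ∀ i j, M i j = ∫ m, f m i * f m j ∂ν) :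
    ∫ m, (∑ a, v a * f m a)^2 ∂ν = ∑ a, ∑ b, v a * (M a b * v b) := by
  have hint : ∀ a b : Fin n, Integrable (fun m => f m a * f m b) ν := fun a b =>
    mul_integrable' (memℒp_comp' hf a) (memℒp_comp' hf b)
  have expand : ∀ m, (∑ a, v a * f m a)^2
      = ∑ a, ∑ b, (v a * v b) * (f m a * f m b) := by
    intro m
    rw [sq, Finset.sum_mul_sum]
    exact Finset.sum_congr rfl fun a _ => Finset.sum_congr rfl fun b _ => by ring
  simp_rw [expand]
  rw [integral_finset_sum _ (fun a _ => by
    exact integrable_finset_sum _ (fun b _ => ((hint a b).const_mul _)))]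
  apply Finset.sum_congr rfl; intro a _
  rw [integral_finset_sum _ (fun b _ => ((hint a b).const_mul _))]
  apply Finset.sum_congr rfl; intro b _
  rw [MeasureTheory.integral_const_mul, hM a b]
  ring

lemma key_lemma {n r : ℕ} (hr : r ≤ n)
    {f : α → E n} (hf : MemLp f 2 ν)
    (M : Matrix (Fin n) (Fin n) ℝ) (hM : ∀ i j, M i j = ∫ m, f m i * f m j ∂ν)
    (lam : Fin n → ℝ) (U : Matrix (Fin n) (Fin n) ℝ)
    (horth : Uᵀ * U = 1) (heig : M * U = U * Matrix.diagonal lam)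
    (Ur : Matrix (Fin n) (Fin r) ℝ)
    (hUr : ∀ (i : Fin n) (j : Fin r), Ur i j = U i (Fin.castLE hr j)) :
    ∫ m, ‖f m - matApp (Ur * Urᵀ) (f m)‖^2 ∂ν
      = ∑ i ∈ Finset.univ.filter (fun i : Fin n => r ≤ (i:ℕ)), lam i := by
  have h1 : ∀ m, ‖f m - matApp (Ur * Urᵀ) (f m)‖^2
      = ∑ i ∈ Finset.univ.filter (fun i : Fin n => r ≤ (i:ℕ)), (∑ a, U a i * f m a)^2 :=
    fun m => resid_sq' hr U horth Ur hUr (f m)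
  simp_rw [h1]
  rw [integral_finset_sum _ (fun i _ => (memℒp_dot' hf _).integrable_sq)]
  refine Finset.sum_congr rfl fun i _ => ?_
  rw [integral_dot_sq' hf _ M hM]
  exact diag_entry' M U lam horth heig i

lemma norm_add_sq_le' {F : Type*} [NormedAddCommGroup F] (a b : F) :
    ‖a + b‖^2 ≤ 2*‖a‖^2 + 2*‖b‖^2 := by
  have h := pow_le_pow_left₀ (norm_nonneg (a+b)) (norm_add_le a b) 2
  nlinarith [sq_nonneg (‖a‖ - ‖b‖)]

end MT

/-- Combined KLE-to-POD ridge function bound: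
`‖q − Φ̂_r Φ̂_rᵀ q_r‖²_{L²_ν} ≤ 2 L_q² Σ_{i>r} λ_i^{KLE} + 2 Σ_{i>r} λ̂_i^{POD}`,
where `q_r = q ∘ (V_r V_rᵀ)` is the KLE-truncated map and `Φ̂_r` is its rank-`r`
POD basis. -/
theorem kle_pod_ridge_bound {dM dQ : ℕ}
    (ν : Measure (E dM)) [IsProbabilityMeasure ν]
    (hmom : MemLp (fun m : E dM => m) 2 ν)
    (hmean0 : (∫ m, m ∂ν) = 0)
    (C : Matrix (Fin dM) (Fin dM) ℝ)
    (hC : ∀ i j, C i j = ∫ m, m i * m j ∂ν)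
    (lamKLE : Fin dM → ℝ) (Vfull : Matrix (Fin dM) (Fin dM) ℝ)
    (horthV : Vfullᵀ * Vfull = 1)
    (heigV : C * Vfull = Vfull * Matrix.diagonal lamKLE)
    (hsortV : ∀ i j : Fin dM, i ≤ j → lamKLE j ≤ lamKLE i)
    {r : ℕ} (hrM : r ≤ dM) (hrQ : r ≤ dQ)
    (Vr : Matrix (Fin dM) (Fin r) ℝ)
    (hVr : ∀ (i : Fin dM) (j : Fin r), Vr i j = Vfull i (Fin.castLE hrM j))
    (q : E dM → E dQ) (L : ℝ)
    (hq_meas : Measurable q) (hq : MemLp q 2 ν)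
    (hLip : ∀ x y : E dM, ‖q x - q y‖ ≤ L * ‖x - y‖)
    (qr : E dM → E dQ)
    (hqr : qr = fun m => q (matApp (Vr * Vrᵀ) m))
    (lamPOD : Fin dQ → ℝ) (Φfull : Matrix (Fin dQ) (Fin dQ) ℝ)
    (horthΦ : Φfullᵀ * Φfull = 1)
    (heigΦ : secondMoment ν qr * Φfull = Φfull * Matrix.diagonal lamPOD)
    (hsortΦ : ∀ i j : Fin dQ, i ≤ j → lamPOD j ≤ lamPOD i)
    (Φr : Matrix (Fin dQ) (Fin r) ℝ)
    (hΦr : ∀ (i : Fin dQ) (j : Fin r), Φr i j = Φfull i (Fin.castLE hrQ j)) :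
    ∫ m, ‖q m - matApp (Φr * Φrᵀ) (qr m)‖ ^ 2 ∂ν ≤
      2 * L ^ 2 * ∑ i ∈ Finset.univ.filter (fun i : Fin dM => r ≤ (i : ℕ)), lamKLE i +
        2 * ∑ i ∈ Finset.univ.filter (fun i : Fin dQ => r ≤ (i : ℕ)), lamPOD i := by
  -- MemLp facts
  have hTm : MemLp (fun m : E dM => matApp (Vr * Vrᵀ) m) 2 ν :=
    (Matrix.toEuclideanLin (Vr * Vrᵀ)).toContinuousLinearMap.comp_memLp' hmom
  have hresid : MemLp (fun m : E dM => m - matApp (Vr * Vrᵀ) m) 2 ν := hmom.sub hTm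
  have hqr_meas : Measurable qr := by
    rw [hqr]
    exact hq_meas.comp
      (Matrix.toEuclideanLin (Vr * Vrᵀ)).toContinuousLinearMap.continuous.measurable
  have hdiff : MemLp (fun m => q m - qr m) 2 ν := by
    refine MemLp.of_le_mul (c := L) hresid
      ((hq_meas.sub hqr_meas).aestronglyMeasurable)
      (Filter.Eventually.of_forall fun m => ?_)
    have h0 : ‖(fun m : E dM => m - matApp (Vr * Vrᵀ) m) m‖ = ‖m - matApp (Vr * Vrᵀ) m‖ := rfl
    rw [h0, hqr]
    exact hLip m (matApp (Vr * Vrᵀ) m)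
  have hqr2 : MemLp qr 2 ν := by
    have h := hq.sub hdiff
    have e : (q - fun m => q m - qr m) = qr := by
      funext m
      show q m - (q m - qr m) = qr m
      abel
    rwa [e] at h
  have hPqr : MemLp (fun m => matApp (Φr * Φrᵀ) (qr m)) 2 ν :=
    (Matrix.toEuclideanLin (Φr * Φrᵀ)).toContinuousLinearMap.comp_memLp' hqr2
  have hpod : MemLp (fun m => qr m - matApp (Φr * Φrᵀ) (qr m)) 2 ν := hqr2.sub hPqr
  -- the two exact trace identities
  have hKLE : ∫ m, ‖m - matApp (Vr * Vrᵀ) m‖^2 ∂ν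
      = ∑ i ∈ Finset.univ.filter (fun i : Fin dM => r ≤ (i:ℕ)), lamKLE i :=
    key_lemma hrM hmom C hC lamKLE Vfull horthV heigV Vr hVr
  have hPOD : ∫ m, ‖qr m - matApp (Φr * Φrᵀ) (qr m)‖^2 ∂ν
      = ∑ i ∈ Finset.univ.filter (fun i : Fin dQ => r ≤ (i:ℕ)), lamPOD i :=
    key_lemma hrQ hqr2 (secondMoment ν qr) (fun i j => rfl) lamPOD Φfull horthΦ heigΦ Φr hΦr
  -- integrability of squared norms
  have I1 : Integrable (fun m => ‖m - matApp (Vr * Vrᵀ) m‖^2) ν :=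
    (memLp_two_iff_integrable_sq_norm hresid.1).mp hresid
  have I2 : Integrable (fun m => ‖q m - qr m‖^2) ν :=
    (memLp_two_iff_integrable_sq_norm hdiff.1).mp hdiff
  have I3 : Integrable (fun m => ‖qr m - matApp (Φr * Φrᵀ) (qr m)‖^2) ν :=
    (memLp_two_iff_integrable_sq_norm hpod.1).mp hpod
  -- step 1 : triangle-type bound
  have step1 : ∫ m, ‖q m - matApp (Φr * Φrᵀ) (qr m)‖ ^ 2 ∂ν
      ≤ ∫ m, (2*‖q m - qr m‖^2 + 2*‖qr m - matApp (Φr * Φrᵀ) (qr m)‖^2) ∂ν := by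
    refine integral_mono_of_nonneg (Filter.Eventually.of_forall fun m => by positivity)
      ((I2.const_mul 2).add (I3.const_mul 2))
      (Filter.Eventually.of_forall fun m => ?_)
    have e : q m - matApp (Φr * Φrᵀ) (qr m)
        = (q m - qr m) + (qr m - matApp (Φr * Φrᵀ) (qr m)) := by abel
    show ‖q m - matApp (Φr * Φrᵀ) (qr m)‖^2
        ≤ 2*‖q m - qr m‖^2 + 2*‖qr m - matApp (Φr * Φrᵀ) (qr m)‖^2
    rw [e]
    exact norm_add_sq_le' _ _
  have split : ∫ m, (2*‖q m - qr m‖^2 + 2*‖qr m - matApp (Φr * Φrᵀ) (qr m)‖^2) ∂ν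
      = 2 * (∫ m, ‖q m - qr m‖^2 ∂ν)
        + 2 * (∫ m, ‖qr m - matApp (Φr * Φrᵀ) (qr m)‖^2 ∂ν) := by
    rw [integral_add (I2.const_mul 2) (I3.const_mul 2),
      MeasureTheory.integral_const_mul, MeasureTheory.integral_const_mul]
  -- step 2 : Lipschitz bound
  have step2 : ∫ m, ‖q m - qr m‖^2 ∂ν
      ≤ L^2 * ∑ i ∈ Finset.univ.filter (fun i : Fin dM => r ≤ (i:ℕ)), lamKLE i := by
    have hb : ∫ m, ‖q m - qr m‖^2 ∂ν ≤ ∫ m, L^2 * ‖m - matApp (Vr * Vrᵀ) m‖^2 ∂ν := by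
      refine integral_mono_of_nonneg (Filter.Eventually.of_forall fun m => by positivity)
        (I1.const_mul _) (Filter.Eventually.of_forall fun m => ?_)
      have h := hLip m (matApp (Vr * Vrᵀ) m)
      show ‖q m - qr m‖^2 ≤ L^2 * ‖m - matApp (Vr * Vrᵀ) m‖^2
      rw [hqr]
      show ‖q m - q (matApp (Vr * Vrᵀ) m)‖^2 ≤ L^2 * ‖m - matApp (Vr * Vrᵀ) m‖^2
      nlinarith [norm_nonneg (q m - q (matApp (Vr * Vrᵀ) m)),
        norm_nonneg (m - matApp (Vr * Vrᵀ) m)]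
    rwa [MeasureTheory.integral_const_mul, hKLE] at hb
  calc ∫ m, ‖q m - matApp (Φr * Φrᵀ) (qr m)‖ ^ 2 ∂ν
      ≤ ∫ m, (2*‖q m - qr m‖^2 + 2*‖qr m - matApp (Φr * Φrᵀ) (qr m)‖^2) ∂ν := step1
    _ = 2 * (∫ m, ‖q m - qr m‖^2 ∂ν)
        + 2 * (∫ m, ‖qr m - matApp (Φr * Φrᵀ) (qr m)‖^2 ∂ν) := split
    _ ≤ 2 * (L^2 * ∑ i ∈ Finset.univ.filter (fun i : Fin dM => r ≤ (i:ℕ)), lamKLE i)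
        + 2 * (∫ m, ‖qr m - matApp (Φr * Φrᵀ) (qr m)‖^2 ∂ν) := by linarith [step2]
    _ = 2 * L ^ 2 * ∑ i ∈ Finset.univ.filter (fun i : Fin dM => r ≤ (i : ℕ)), lamKLE i +
        2 * ∑ i ∈ Finset.univ.filter (fun i : Fin dQ => r ≤ (i : ℕ)), lamPOD i := by
      rw [hPOD]; ring
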